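/- arXiv:2407.20562 — 2 statements merged into one kernel-verified Lean document; each statement's English description precedes it below -/
import Mathlib

section
/- In the setting of Proposition 5.1, let d ∈ (0,1), let p and β be the constants of the quasisymmetric distortion lemma for f, and let j satisfy m_{k−1} ≤ j < m_k. Let J_j be a branch of f(H_j) and J_{j,1},…,J_{j,N(J_j)} the branches of f(H_{j+1}) contained in J_j. Then Σ_{i=1}^{N(J_j)} |J_{j,i}| ≥ (1 − 8χ²(M² + 2)·(γ(j+1))^p)·|J_j|. -/
open Set Filter Metric

noncomputable section

/-- A word `σ = σ₁⋯σ_k` is valid for the branching sequence `n` if `1 ≤ σ_j ≤ n j`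
for every `1 ≤ j ≤ k`.  Words are represented as lists (read with 1-based indices). -/
def ValidWord (n : ℕ → ℕ) (σ : List ℕ) : Prop :=
  ∀ j, j < σ.length → 1 ≤ σ.getD j 0 ∧ σ.getD j 0 ≤ n (j + 1)

/-- The conditions (1)–(4) of Definition 2.1: the family of closed intervals
`I_σ = [a σ, b σ]` (for `σ ∈ D`) has homogeneous perfect structure with parameters
`n`, `c`, `ξ`. -/
structure HPStruct (n : ℕ → ℕ) (c : ℕ → ℝ) (ξ : ℕ → ℕ → ℝ) (a b : List ℕ → ℝ) : Prop where
  /-- each `I_{σ*j}` is a subinterval of `I_σ` -/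
  sub : ∀ σ : List ℕ, ValidWord n σ → ∀ j, 1 ≤ j → j ≤ n (σ.length + 1) →
    Set.Icc (a (σ ++ [j])) (b (σ ++ [j])) ⊆ Set.Icc (a σ) (b σ)
  /-- `min I_{σ*(l+1)} ≥ max I_{σ*l}` -/
  ord : ∀ σ : List ℕ, ValidWord n σ → ∀ l, 1 ≤ l → l + 1 ≤ n (σ.length + 1) →
    b (σ ++ [l]) ≤ a (σ ++ [l + 1])
  /-- `|I_{σ*j}| / |I_σ| = c_k` -/
  ratio : ∀ σ : List ℕ, ValidWord n σ → ∀ j, 1 ≤ j → j ≤ n (σ.length + 1) →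
    b (σ ++ [j]) - a (σ ++ [j]) = c (σ.length + 1) * (b σ - a σ)
  /-- `min I_{σ*1} - min I_σ = ξ_{k,0}` -/
  gap0 : ∀ σ : List ℕ, ValidWord n σ → a (σ ++ [1]) - a σ = ξ (σ.length + 1) 0
  /-- `min I_{σ*(l+1)} - max I_{σ*l} = ξ_{k,l}` -/
  gapl : ∀ σ : List ℕ, ValidWord n σ → ∀ l, 1 ≤ l → l + 1 ≤ n (σ.length + 1) →
    a (σ ++ [l + 1]) - b (σ ++ [l]) = ξ (σ.length + 1) l
  /-- `max I_σ - max I_{σ*n_k} = ξ_{k,n_k}` -/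
  gapn : ∀ σ : List ℕ, ValidWord n σ → b σ - b (σ ++ [n (σ.length + 1)]) =
    ξ (σ.length + 1) (n (σ.length + 1))

/-- A homogeneous perfect set datum `E(I₀, {n_k}, {c_k}, {ξ_{k,l}})` of Definition 2.1:
a nondegenerate initial closed interval `I₀ = [a ∅, b ∅]`, integers `n_k ≥ 2`,
ratios `c_k > 0` with `n_k c_k < 1`, nonnegative gaps `ξ_{k,l}` (`0 ≤ l ≤ n_k`), and a
family of closed intervals `I_σ = [a σ, b σ]` with homogeneous perfect structure. -/
structure HPS where
  n : ℕ → ℕ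
  c : ℕ → ℝ
  ξ : ℕ → ℕ → ℝ
  a : List ℕ → ℝ
  b : List ℕ → ℝ
  hn : ∀ k, 1 ≤ k → 2 ≤ n k
  hc : ∀ k, 1 ≤ k → 0 < c k
  hnc : ∀ k, 1 ≤ k → (n k : ℝ) * c k < 1
  hξ : ∀ k, 1 ≤ k → ∀ l, l ≤ n k → 0 ≤ ξ k l
  hab : a [] < b []
  struct : HPStruct n c ξ a b

namespace HPS

variable (S : HPS)

/-- `E_k`, the union of the `k`-order basic intervals. -/
def Ek (k : ℕ) : Set ℝ :=
  ⋃ σ ∈ {σ : List ℕ | σ.length = k ∧ ValidWord S.n σ}, Set.Icc (S.a σ) (S.b σ)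

/-- The homogeneous perfect set `E = ⋂_k E_k`. -/
def E : Set ℝ := ⋂ k, S.Ek k

/-- Left endpoint of the trimmed interval `I_σ*` (for `σ ∈ D_k`):
`min I_σ* - min I_σ = ξ_{k+1,0}`. -/
def aStar (σ : List ℕ) : ℝ := S.a σ + S.ξ (σ.length + 1) 0

/-- Right endpoint of the trimmed interval `I_σ*`:
`max I_σ - max I_σ* = ξ_{k+1,n_{k+1}}`. -/
def bStar (σ : List ℕ) : ℝ := S.b σ - S.ξ (σ.length + 1) (S.n (σ.length + 1))

/-- `E_k* = ⋃_{σ ∈ D_k} I_σ*`. -/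
def EkStar (k : ℕ) : Set ℝ :=
  ⋃ σ ∈ {σ : List ℕ | σ.length = k ∧ ValidWord S.n σ}, Set.Icc (S.aStar σ) (S.bStar σ)

/-- `δ_k = |I_σ*|` for `σ ∈ D_k` (this common value is computed on the word `1⋯1`). -/
def delta (k : ℕ) : ℝ :=
  S.bStar (List.replicate k 1) - S.aStar (List.replicate k 1)

/-- `c_k* = δ_k / δ_{k-1}`. -/
def cStar (k : ℕ) : ℝ := S.delta k / S.delta (k - 1)

/-- `δ_k* = δ₀ c₁* ⋯ c_k*`. -/
def deltaStar (k : ℕ) : ℝ := S.delta 0 * ∏ j ∈ Finset.Icc 1 k, S.cStar j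

/-- `N_k* = n₁* ⋯ n_k* = n₁ ⋯ n_k`. -/
def Nstar (k : ℕ) : ℕ := ∏ j ∈ Finset.Icc 1 k, S.n j

/-- The reconstructed gap parameters: `ξ*_{k,l} = ξ_{k,l} + ξ_{k+1,0} + ξ_{k+1,n_{k+1}}`
for `1 ≤ l ≤ n_k - 1`, `ξ*_{k,0} = ξ_{k+1,0}`, `ξ*_{k,n_k} = ξ_{k+1,n_{k+1}}`. -/
def xiStar (k l : ℕ) : ℝ :=
  if l = 0 then S.ξ (k + 1) 0
  else if l = S.n k then S.ξ (k + 1) (S.n (k + 1))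
  else S.ξ k l + S.ξ (k + 1) 0 + S.ξ (k + 1) (S.n (k + 1))

/-- `α̲*_k = min_{1 ≤ l ≤ n_k - 1} ξ*_{k,l}`. -/
def alphaLo (k : ℕ) : ℝ := sInf ((fun l => S.xiStar k l) '' Set.Icc 1 (S.n k - 1))

/-- `α̅*_k = max_{1 ≤ l ≤ n_k - 1} ξ*_{k,l}`. -/
def alphaHi (k : ℕ) : ℝ := sSup ((fun l => S.xiStar k l) '' Set.Icc 1 (S.n k - 1))

end HPS

/-- The gap-comparability condition: `max_{1≤l≤n_k-1} ξ_{k,l} ≤ χ · min_{1≤l≤n_k-1} ξ_{k,l}`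
for every `k ≥ 1`. -/
def GapComparable (S : HPS) (χ : ℝ) : Prop :=
  ∀ k, 1 ≤ k → ∀ l l', 1 ≤ l → l ≤ S.n k - 1 → 1 ≤ l' → l' ≤ S.n k - 1 →
    S.ξ k l ≤ χ * S.ξ k l'

/-- `M = ⌊2χ⌋ + 1`. -/
def Mconst (χ : ℝ) : ℕ := ⌊2 * χ⌋₊ + 1

/-- `i_k`: equal to `1` if `n_k < M`, and otherwise the integer with `M^{i_k} ≤ n_k < M^{i_k+1}`. -/
def HPS.ik (S : HPS) (χ : ℝ) (k : ℕ) : ℕ := max 1 (Nat.log (Mconst χ) (S.n k))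

/-- `m_k = i₁ + ⋯ + i_k` (with `m₀ = 0`). -/
def HPS.mIdx (S : HPS) (χ : ℝ) (k : ℕ) : ℕ := ∑ l ∈ Finset.Icc 1 k, S.ik χ l

/-- For `m ≥ 1`, the index `k` with `m_{k-1} < m ≤ m_k`. -/
def HPS.kOf (S : HPS) (χ : ℝ) (m : ℕ) : ℕ := sInf {k | m ≤ S.mIdx χ k}

/-- A homeomorphism `f : ℝ → ℝ` is a 1-dimensional quasisymmetric mapping if there is a
homeomorphism `η : [0,∞) → [0,∞)` with
`|f x - f a| / |f x - f b| ≤ η (|x - a| / |x - b|)` for all `x ≠ b`. -/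
def IsQuasisymmetric (f : ℝ → ℝ) : Prop :=
  IsHomeomorph f ∧
    ∃ η : (Set.Ici (0 : ℝ)) ≃ₜ (Set.Ici (0 : ℝ)),
      ∀ x a b : ℝ, x ≠ b →
        |f x - f a| / |f x - f b| ≤
          (η ⟨|x - a| / |x - b|,
            Set.mem_Ici.mpr (div_nonneg (abs_nonneg _) (abs_nonneg _))⟩).1

/-- The data of the sequence `{H_m}` constructed in Lemma 4.1, with its characterizing
properties.  `Br m` is the finite set of branches of `H_m`, a branch being recorded by its
endpoints, and `H_m = ⋃_{p ∈ Br m} [p.1, p.2]`. -/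
structure BranchSeq (S : HPS) (χ : ℝ) where
  Br : ℕ → Finset (ℝ × ℝ)
  /-- each `H_m` has at least one branch -/
  nonempty : ∀ m, (Br m).Nonempty
  /-- branches are nondegenerate closed intervals -/
  lt : ∀ m, ∀ p ∈ Br m, p.1 < p.2
  /-- distinct branches of `H_m` have disjoint interiors -/
  disj : ∀ m, ∀ p ∈ Br m, ∀ q ∈ Br m, p ≠ q →
    Set.Ioo p.1 p.2 ∩ Set.Ioo q.1 q.2 = ∅
  /-- the sequence `H_m` is decreasing under inclusion -/
  dec : ∀ m, (⋃ p ∈ Br (m + 1), Set.Icc p.1 p.2) ⊆ ⋃ p ∈ Br m, Set.Icc p.1 p.2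
  /-- every branch of `H_{m+1}` is contained in a branch of `H_m` -/
  nested : ∀ m, ∀ q ∈ Br (m + 1), ∃ p ∈ Br m, Set.Icc q.1 q.2 ⊆ Set.Icc p.1 p.2
  /-- `E = ⋂_m H_m` -/
  interE : S.E = ⋂ m, ⋃ p ∈ Br m, Set.Icc p.1 p.2
  /-- `H_{m_k} = E_k*`, the branches being exactly the intervals `I_σ*`, `σ ∈ D_k` -/
  levels : ∀ k, (Br (S.mIdx χ k) : Set (ℝ × ℝ)) =
    {p : ℝ × ℝ | ∃ σ : List ℕ, σ.length = k ∧ ValidWord S.n σ ∧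
      p = (S.aStar σ, S.bStar σ)}
  /-- each branch of `H_m` contains at most `M²` branches of `H_{m+1}` -/
  card_le : ∀ m, ∀ p ∈ Br m,
    {q ∈ (Br (m + 1) : Set (ℝ × ℝ)) | Set.Icc q.1 q.2 ⊆ Set.Icc p.1 p.2}.ncard ≤
      (Mconst χ) ^ 2
  /-- for `m_{k-1} < m < m_k`, each branch of `H_{m-1}` contains exactly `M` branches of `H_m` -/
  exactM : ∀ k, 1 ≤ k → ∀ m, S.mIdx χ (k - 1) < m → m < S.mIdx χ k →
    ∀ p ∈ Br (m - 1),
      {q ∈ (Br m : Set (ℝ × ℝ)) | Set.Icc q.1 q.2 ⊆ Set.Icc p.1 p.2}.ncard = Mconst χ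
  /-- for `m_{k-1} < m < m_k`, each branch of `H_m` is the convex hull of a block of
  consecutive intervals `I_σ*`, `σ ∈ D_k`: its endpoints are endpoints of such intervals -/
  hull : ∀ k, 1 ≤ k → ∀ m, S.mIdx χ (k - 1) < m → m < S.mIdx χ k →
    ∀ p ∈ Br m, ∃ σ τ : List ℕ, σ.length = k ∧ τ.length = k ∧
      ValidWord S.n σ ∧ ValidWord S.n τ ∧ p.1 = S.aStar σ ∧ p.2 = S.bStar τ
  /-- `max_{I ∈ H_m} |I| ≤ 2χ · min_{I ∈ H_m} |I|` -/
  comparable : ∀ m, ∀ p ∈ Br m, ∀ q ∈ Br m, p.2 - p.1 ≤ 2 * χ * (q.2 - q.1)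

namespace BranchSeq

variable {S : HPS} {χ : ℝ} (B : BranchSeq S χ)

/-- `l(H_m)`, the total length of the branches of `H_m`. -/
def len (m : ℕ) : ℝ := ∑ p ∈ B.Br m, (p.2 - p.1)

/-- `max_{I branch of H_m} |I|`. -/
def maxLen (m : ℕ) : ℝ :=
  sSup ((fun p : ℝ × ℝ => p.2 - p.1) '' (B.Br m : Set (ℝ × ℝ)))

/-- `min_{I branch of H_m} |I|`. -/
def minLen (m : ℕ) : ℝ :=
  sInf ((fun p : ℝ × ℝ => p.2 - p.1) '' (B.Br m : Set (ℝ × ℝ)))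

/-- `Λ(m) = max {|J|/|I| : I branch of H_{m-1}, J branch of H_m, J ⊆ I}`. -/
def Lam (m : ℕ) : ℝ :=
  sSup {r : ℝ | ∃ p ∈ B.Br (m - 1), ∃ q ∈ B.Br m,
    Set.Icc q.1 q.2 ⊆ Set.Icc p.1 p.2 ∧ r = (q.2 - q.1) / (p.2 - p.1)}

/-- `λ(m) = min {|J|/|I| : I branch of H_{m-1}, J branch of H_m, J ⊆ I}`. -/
def lamSmall (m : ℕ) : ℝ :=
  sInf {r : ℝ | ∃ p ∈ B.Br (m - 1), ∃ q ∈ B.Br m,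
    Set.Icc q.1 q.2 ⊆ Set.Icc p.1 p.2 ∧ r = (q.2 - q.1) / (p.2 - p.1)}

/-- `γ(m) = α̲*_k / max_{I branch of H_{m-1}} |I|`, where `m_{k-1} < m ≤ m_k`. -/
def gam (m : ℕ) : ℝ := S.alphaLo (S.kOf χ m) / B.maxLen (m - 1)

/-- `Γ(m) = α̅*_k / min_{I branch of H_{m-1}} |I|`, where `m_{k-1} < m ≤ m_k`. -/
def Gam (m : ℕ) : ℝ := S.alphaHi (S.kOf χ m) / B.minLen (m - 1)

open Classical in
/-- `S_ε(m) = {j : 1 ≤ j ≤ m, γ(j) ≤ ε}`. -/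
def Sfin (ε : ℝ) (m : ℕ) : Finset ℕ := (Finset.Icc 1 m).filter (fun j => B.gam j ≤ ε)

open Classical in
/-- The branches of `H_{m+1}` contained in the branch `p` of `H_m`. -/
def children (m : ℕ) (p : ℝ × ℝ) : Finset (ℝ × ℝ) :=
  (B.Br (m + 1)).filter (fun q => p.1 ≤ q.1 ∧ q.2 ≤ p.2)

end BranchSeq

section Aux

lemma validWord_append {n : ℕ → ℕ} {σ : List ℕ} {j : ℕ} (h : ValidWord n σ)
    (h1 : 1 ≤ j) (h2 : j ≤ n (σ.length + 1)) : ValidWord n (σ ++ [j]) := by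
  intro i hi
  rw [List.length_append, List.length_singleton] at hi
  rcases lt_or_eq_of_le (Nat.lt_succ_iff.mp hi) with hlt | heq
  · rw [List.getD_append _ _ _ _ hlt]; exact h i hlt
  · subst heq
    rw [List.getD_append_right _ _ _ _ le_rfl, Nat.sub_self]
    simpa using ⟨h1, h2⟩

lemma validWord_split {n : ℕ → ℕ} {σ : List ℕ} {j : ℕ} (h : ValidWord n (σ ++ [j])) :
    ValidWord n σ ∧ 1 ≤ j ∧ j ≤ n (σ.length + 1) := by
  refine ⟨?_, ?_⟩
  · intro i hi
    have := h i (by rw [List.length_append, List.length_singleton]; omega)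
    rwa [List.getD_append _ _ _ _ hi] at this
  · have := h σ.length (by simp)
    rw [List.getD_append_right _ _ _ _ le_rfl, Nat.sub_self] at this
    simpa using this

namespace HPS

variable (S : HPS)

lemma len_pos : ∀ σ : List ℕ, ValidWord S.n σ → S.a σ < S.b σ := by
  intro σ
  induction σ using List.reverseRecOn with
  | nil => exact fun _ => S.hab
  | append_singleton ρ j ih =>
    intro h
    obtain ⟨hρ, hj1, hj2⟩ := validWord_split h
    have hr := S.struct.ratio ρ hρ j hj1 hj2
    have hcpos := S.hc (ρ.length + 1) (by omega)
    nlinarith [ih hρ]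

lemma b_mono {σ : List ℕ} (hσ : ValidWord S.n σ) {l l' : ℕ} (h1 : 1 ≤ l)
    (hll : l ≤ l') (h2 : l' ≤ S.n (σ.length + 1)) : S.b (σ ++ [l]) ≤ S.b (σ ++ [l']) := by
  have key : ∀ m, l ≤ m → m ≤ S.n (σ.length + 1) → S.b (σ ++ [l]) ≤ S.b (σ ++ [m]) := by
    intro m hm
    induction m, hm using Nat.le_induction with
    | base => exact fun _ => le_rfl
    | succ m hlm ih =>
      intro hm1
      have h3 : m ≤ S.n (σ.length + 1) := by omega
      have hord := S.struct.ord σ hσ m (by omega) hm1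
      have hv : ValidWord S.n (σ ++ [m + 1]) := validWord_append hσ (by omega) hm1
      have hab := (S.len_pos _ hv).le
      calc S.b (σ ++ [l]) ≤ S.b (σ ++ [m]) := ih h3
        _ ≤ S.a (σ ++ [m + 1]) := hord
        _ ≤ S.b (σ ++ [m + 1]) := hab
  exact key l' hll h2

lemma a_mono {σ : List ℕ} (hσ : ValidWord S.n σ) {l l' : ℕ} (h1 : 1 ≤ l)
    (hll : l ≤ l') (h2 : l' ≤ S.n (σ.length + 1)) : S.a (σ ++ [l]) ≤ S.a (σ ++ [l']) := by
  have key : ∀ m, l ≤ m → m ≤ S.n (σ.length + 1) → S.a (σ ++ [l]) ≤ S.a (σ ++ [m]) := by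
    intro m hm
    induction m, hm using Nat.le_induction with
    | base => exact fun _ => le_rfl
    | succ m hlm ih =>
      intro hm1
      have h3 : m ≤ S.n (σ.length + 1) := by omega
      have hord := S.struct.ord σ hσ m (by omega) hm1
      have hv : ValidWord S.n (σ ++ [m]) := validWord_append hσ (by omega) h3
      have hab := (S.len_pos _ hv).le
      calc S.a (σ ++ [l]) ≤ S.a (σ ++ [m]) := ih h3
        _ ≤ S.b (σ ++ [m]) := hab
        _ ≤ S.a (σ ++ [m + 1]) := hord
  exact key l' hll h2

lemma aStar_eq {σ : List ℕ} (hσ : ValidWord S.n σ) : S.aStar σ = S.a (σ ++ [1]) := by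
  have := S.struct.gap0 σ hσ
  unfold HPS.aStar
  linarith

lemma bStar_eq {σ : List ℕ} (hσ : ValidWord S.n σ) :
    S.bStar σ = S.b (σ ++ [S.n (σ.length + 1)]) := by
  have := S.struct.gapn σ hσ
  unfold HPS.bStar
  linarith

lemma star_nondeg {σ : List ℕ} (hσ : ValidWord S.n σ) : S.aStar σ < S.bStar σ := by
  have h2 : 2 ≤ S.n (σ.length + 1) := S.hn _ (by omega)
  rw [S.aStar_eq hσ, S.bStar_eq hσ]
  have hlt : S.a (σ ++ [1]) < S.b (σ ++ [1]) :=
    S.len_pos _ (validWord_append hσ le_rfl (by omega))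
  have hmono : S.b (σ ++ [1]) ≤ S.b (σ ++ [S.n (σ.length + 1)]) :=
    S.b_mono hσ le_rfl (by omega) le_rfl
  linarith

lemma star_sub {π : List ℕ} {l : ℕ} (hπ : ValidWord S.n π) (h1 : 1 ≤ l)
    (h2 : l ≤ S.n (π.length + 1)) :
    S.aStar π ≤ S.aStar (π ++ [l]) ∧ S.bStar (π ++ [l]) ≤ S.bStar π := by
  have hξ1 : 0 ≤ S.ξ ((π ++ [l]).length + 1) 0 := S.hξ _ (by omega) 0 (Nat.zero_le _)
  have hξ2 : 0 ≤ S.ξ ((π ++ [l]).length + 1) (S.n ((π ++ [l]).length + 1)) :=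
    S.hξ _ (by omega) _ le_rfl
  constructor
  · rw [S.aStar_eq hπ]
    have ha : S.a (π ++ [1]) ≤ S.a (π ++ [l]) := S.a_mono hπ le_rfl h1 h2
    unfold HPS.aStar
    linarith
  · rw [S.bStar_eq hπ]
    have hb : S.b (π ++ [l]) ≤ S.b (π ++ [S.n (π.length + 1)]) := S.b_mono hπ h1 h2 le_rfl
    unfold HPS.bStar
    linarith

lemma star_gap {π : List ℕ} {l : ℕ} (hπ : ValidWord S.n π) (h1 : 1 ≤ l)
    (h2 : l + 1 ≤ S.n (π.length + 1)) :
    S.aStar (π ++ [l + 1]) - S.bStar (π ++ [l]) = S.xiStar (π.length + 1) l := by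
  have hg := S.struct.gapl π hπ l h1 h2
  have hl1 : (π ++ [l + 1]).length = π.length + 1 := by simp
  have hl2 : (π ++ [l]).length = π.length + 1 := by simp
  have hne0 : l ≠ 0 := by omega
  have hnen : l ≠ S.n (π.length + 1) := by omega
  unfold HPS.aStar HPS.bStar HPS.xiStar
  rw [hl1, hl2, if_neg hne0, if_neg hnen]
  linarith

lemma alphaLo_facts {k : ℕ} (hk : 1 ≤ k) :
    S.ξ (k + 1) 0 ≤ S.alphaLo k ∧ S.ξ (k + 1) (S.n (k + 1)) ≤ S.alphaLo k := by
  have h2 := S.hn k hk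
  have hne : ((fun l => S.xiStar k l) '' Set.Icc 1 (S.n k - 1)).Nonempty :=
    ⟨S.xiStar k 1, ⟨1, ⟨le_rfl, by omega⟩, rfl⟩⟩
  have key : ∀ x ∈ (fun l => S.xiStar k l) '' Set.Icc 1 (S.n k - 1),
      S.ξ (k + 1) 0 ≤ x ∧ S.ξ (k + 1) (S.n (k + 1)) ≤ x := by
    rintro x ⟨l, ⟨hl1, hl2⟩, rfl⟩
    have hξl : 0 ≤ S.ξ k l := S.hξ k hk l (by omega)
    have hξ0 : 0 ≤ S.ξ (k + 1) 0 := S.hξ (k + 1) (by omega) 0 (Nat.zero_le _)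
    have hξn : 0 ≤ S.ξ (k + 1) (S.n (k + 1)) := S.hξ (k + 1) (by omega) _ le_rfl
    show S.ξ (k + 1) 0 ≤ S.xiStar k l ∧ S.ξ (k + 1) (S.n (k + 1)) ≤ S.xiStar k l
    unfold HPS.xiStar
    rw [if_neg (by omega), if_neg (by omega)]
    exact ⟨by linarith, by linarith⟩
  exact ⟨le_csInf hne fun x hx => (key x hx).1, le_csInf hne fun x hx => (key x hx).2⟩

lemma xiStar_nonneg {k l : ℕ} (hk : 1 ≤ k) (hl1 : 1 ≤ l) (hl2 : l ≤ S.n k - 1) :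
    0 ≤ S.xiStar k l := by
  have h2 := S.hn k hk
  have hξl : 0 ≤ S.ξ k l := S.hξ k hk l (by omega)
  have hξ0 : 0 ≤ S.ξ (k + 1) 0 := S.hξ (k + 1) (by omega) 0 (Nat.zero_le _)
  have hξn : 0 ≤ S.ξ (k + 1) (S.n (k + 1)) := S.hξ (k + 1) (by omega) _ le_rfl
  unfold HPS.xiStar
  rw [if_neg (by omega), if_neg (by omega)]
  linarith

lemma xiStar_le_chi_alphaLo {χ : ℝ} (hχ : 1 ≤ χ) (hgap : GapComparable S χ)
    {k l : ℕ} (hk : 1 ≤ k) (hl1 : 1 ≤ l) (hl2 : l ≤ S.n k - 1) :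
    S.xiStar k l ≤ χ * S.alphaLo k := by
  have hχ0 : (0 : ℝ) < χ := by linarith
  have h2 := S.hn k hk
  have hne : ((fun l => S.xiStar k l) '' Set.Icc 1 (S.n k - 1)).Nonempty :=
    ⟨S.xiStar k 1, ⟨1, ⟨le_rfl, by omega⟩, rfl⟩⟩
  have key : ∀ x ∈ (fun l => S.xiStar k l) '' Set.Icc 1 (S.n k - 1),
      S.xiStar k l / χ ≤ x := by
    rintro x ⟨l', ⟨hl1', hl2'⟩, rfl⟩
    show S.xiStar k l / χ ≤ S.xiStar k l'
    rw [div_le_iff₀ hχ0]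
    have hg := hgap k hk l l' hl1 hl2 hl1' hl2'
    have hξ0 : 0 ≤ S.ξ (k + 1) 0 := S.hξ (k + 1) (by omega) 0 (Nat.zero_le _)
    have hξn : 0 ≤ S.ξ (k + 1) (S.n (k + 1)) := S.hξ (k + 1) (by omega) _ le_rfl
    unfold HPS.xiStar
    rw [if_neg (by omega : l ≠ 0), if_neg (by omega : l ≠ S.n k),
      if_neg (by omega : l' ≠ 0), if_neg (by omega : l' ≠ S.n k)]
    nlinarith
  have hle := le_csInf hne key
  have := (div_le_iff₀ hχ0).1 hle
  unfold HPS.alphaLo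
  linarith

lemma mIdx_mono (χ : ℝ) : Monotone (S.mIdx χ) := fun a b hab =>
  Finset.sum_le_sum_of_subset (Finset.Icc_subset_Icc_right hab)

lemma kOf_succ_eq (χ : ℝ) {j k : ℕ} (hk : 1 ≤ k)
    (hj1 : S.mIdx χ (k - 1) ≤ j) (hj2 : j < S.mIdx χ k) : S.kOf χ (j + 1) = k := by
  have hmem : k ∈ {k' | j + 1 ≤ S.mIdx χ k'} := hj2
  refine le_antisymm (Nat.sInf_le hmem) ?_
  refine le_csInf ⟨k, hmem⟩ fun b hb => ?_
  by_contra hbk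
  push_neg at hbk
  have hmono : S.mIdx χ b ≤ S.mIdx χ (k - 1) := S.mIdx_mono χ (by omega)
  have hb' : j + 1 ≤ S.mIdx χ b := hb
  omega

end HPS

lemma Icc_sub_endpoints {a b c d : ℝ} (hab : a < b) (h : Set.Icc a b ⊆ Set.Icc c d) :
    c ≤ a ∧ b ≤ d := (Set.Icc_subset_Icc_iff hab.le).1 h

lemma Ioo_disj_order {a b c d : ℝ} (hab : a < b) (hcd : c < d)
    (h : Set.Ioo a b ∩ Set.Ioo c d = ∅) : b ≤ c ∨ d ≤ a := by
  by_contra hcon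
  push_neg at hcon
  obtain ⟨h1, h2⟩ := hcon
  have hlt : max a c < min b d := max_lt (lt_min hab h2) (lt_min h1 hcd)
  have hx : (max a c + min b d) / 2 ∈ Set.Ioo a b ∩ Set.Ioo c d := by
    constructor
    · exact ⟨by have := le_max_left a c; linarith,
        by have := min_le_left b d; linarith⟩
    · exact ⟨by have := le_max_right a c; linarith,
        by have := min_le_right b d; linarith⟩
  rw [h] at hx
  exact hx

namespace BranchSeq

variable {S : HPS} {χ : ℝ}

lemma chainUp (B : BranchSeq S χ) (m : ℕ) :
    ∀ m', m ≤ m' → ∀ q ∈ B.Br m', ∃ p ∈ B.Br m, Set.Icc q.1 q.2 ⊆ Set.Icc p.1 p.2 := by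
  intro m' hm
  induction m', hm using Nat.le_induction with
  | base => exact fun q hq => ⟨q, hq, subset_rfl⟩
  | succ m' hmm ih =>
    intro q hq
    obtain ⟨p', hp', hs⟩ := B.nested m' q hq
    obtain ⟨p, hp, hs'⟩ := ih p' hp'
    exact ⟨p, hp, hs.trans hs'⟩

lemma branch_eq (B : BranchSeq S χ) {m : ℕ} {p q : ℝ × ℝ}
    (hp : p ∈ B.Br m) (hq : q ∈ B.Br m)
    (h : (Set.Ioo p.1 p.2 ∩ Set.Ioo q.1 q.2).Nonempty) : p = q := by
  by_contra hne
  rw [B.disj m p hp q hq hne] at h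
  exact Set.not_nonempty_empty h

lemma mem_levels (B : BranchSeq S χ) {k : ℕ} {σ : List ℕ}
    (hlen : σ.length = k) (hval : ValidWord S.n σ) :
    (S.aStar σ, S.bStar σ) ∈ B.Br (S.mIdx χ k) := by
  have : ((S.aStar σ, S.bStar σ) : ℝ × ℝ) ∈ (B.Br (S.mIdx χ k) : Set (ℝ × ℝ)) := by
    rw [B.levels k]; exact ⟨σ, hlen, hval, rfl⟩
  exact this

lemma levels_repr (B : BranchSeq S χ) {k : ℕ} {q : ℝ × ℝ}
    (hq : q ∈ B.Br (S.mIdx χ k)) :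
    ∃ σ : List ℕ, σ.length = k ∧ ValidWord S.n σ ∧ q = (S.aStar σ, S.bStar σ) := by
  have hq' : q ∈ (B.Br (S.mIdx χ k) : Set (ℝ × ℝ)) := hq
  rw [B.levels k] at hq'
  exact hq'

end BranchSeq

lemma telescope_sum (g : ℝ → ℝ) (hg : Monotone g) (D : ℝ) (hD : 0 ≤ D) :
    ∀ (n : ℕ) (T : Finset (ℝ × ℝ)) (A B : ℝ), T.card = n → A ≤ B →
      (∀ p ∈ T, p.1 < p.2) → (∀ p ∈ T, A ≤ p.1 ∧ p.2 ≤ B) →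
      (∀ p ∈ T, ∀ q ∈ T, p ≠ q → p.2 ≤ q.1 ∨ q.2 ≤ p.1) →
      (∀ u v : ℝ, A ≤ u → u < v → v ≤ B → (∀ q ∈ T, q.2 ≤ u ∨ v ≤ q.1) →
        (u = A ∨ ∃ q ∈ T, q.2 = u) → g v - g u ≤ D) →
      g B - g A ≤ (∑ p ∈ T, (g p.2 - g p.1)) + ((n : ℝ) + 1) * D := by
  intro n
  induction n with
  | zero =>
    intro T A B hcard hAB hnd hsub hdisj hgap
    have hT : T = ∅ := Finset.card_eq_zero.1 hcard
    subst hT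
    have hone : g B - g A ≤ D := by
      rcases eq_or_lt_of_le hAB with h | h
      · rw [h]; simpa using hD
      · exact hgap A B le_rfl h le_rfl (by simp) (Or.inl rfl)
    simpa using hone
  | succ n ih =>
    intro T A B hcard hAB hnd hsub hdisj hgap
    have hne : T.Nonempty := Finset.card_pos.1 (by omega)
    obtain ⟨q₀, hq₀, hmin⟩ := T.exists_min_image (fun q => q.1) hne
    have hq₀nd := hnd q₀ hq₀
    obtain ⟨hA1, hB1⟩ := hsub q₀ hq₀
    have hstep1 : g q₀.1 - g A ≤ D := by
      rcases eq_or_lt_of_le hA1 with h | h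
      · rw [← h]; simpa using hD
      · exact hgap A q₀.1 le_rfl h (le_trans hq₀nd.le hB1)
          (fun q hq => Or.inr (hmin q hq)) (Or.inl rfl)
    have hright : ∀ r ∈ T.erase q₀, q₀.2 ≤ r.1 := by
      intro r hr
      have hrT := Finset.mem_of_mem_erase hr
      have hne' : q₀ ≠ r := (Finset.ne_of_mem_erase hr).symm
      rcases hdisj q₀ hq₀ r hrT hne' with h | h
      · exact h
      · exfalso; have := hmin r hrT; have := hnd r hrT; linarith
    have hcard' : (T.erase q₀).card = n := by
      rw [Finset.card_erase_of_mem hq₀, hcard]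
      omega
    have hgap' : ∀ u v : ℝ, q₀.2 ≤ u → u < v → v ≤ B →
        (∀ r ∈ T.erase q₀, r.2 ≤ u ∨ v ≤ r.1) →
        (u = q₀.2 ∨ ∃ r ∈ T.erase q₀, r.2 = u) → g v - g u ≤ D := by
      intro u v hu huv hvB hno hrep
      refine hgap u v (le_trans hA1 (le_trans hq₀nd.le hu)) huv hvB ?_ ?_
      · intro r hr
        by_cases hrq : r = q₀
        · subst hrq; exact Or.inl hu
        · exact hno r (Finset.mem_erase.2 ⟨hrq, hr⟩)
      · rcases hrep with h | ⟨r, hr, hr2⟩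
        · exact Or.inr ⟨q₀, hq₀, h.symm⟩
        · exact Or.inr ⟨r, Finset.mem_of_mem_erase hr, hr2⟩
    have hih := ih (T.erase q₀) q₀.2 B hcard' hB1
      (fun r hr => hnd r (Finset.mem_of_mem_erase hr))
      (fun r hr => ⟨hright r hr, (hsub r (Finset.mem_of_mem_erase hr)).2⟩)
      (fun r hr s hs hne' =>
        hdisj r (Finset.mem_of_mem_erase hr) s (Finset.mem_of_mem_erase hs) hne')
      hgap'
    have hsplit : ∑ r ∈ T, (g r.2 - g r.1) =
        (g q₀.2 - g q₀.1) + ∑ r ∈ T.erase q₀, (g r.2 - g r.1) :=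
      (Finset.add_sum_erase T _ hq₀).symm
    push_cast
    push_cast at hih
    linarith [hg hq₀nd.le]

end Aux


set_option maxHeartbeats 1000000 in
/-- **(5.10).** In the setting of Proposition 5.1, for `m_{k-1} ≤ j < m_k`, a branch `J_j` of
`f(H_j)` and the branches of `f(H_{j+1})` contained in it,
`Σ_i |J_{j,i}| ≥ (1 - 8χ²(M²+2)·γ(j+1)^p)·|J_j|`, where `p, β` are the constants of the
quasisymmetric distortion lemma for `f`. -/
theorem children_total_length_lower_bound
    (S : HPS) (χ : ℝ) (hχ : 1 ≤ χ) (hgap : GapComparable S χ)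
    (B : BranchSeq S χ)
    (f : ℝ → ℝ) (hf : IsQuasisymmetric f)
    (β p q : ℝ) (hβ : 0 < β) (hp : 0 < p) (hp1 : p ≤ 1) (hq : 1 ≤ q)
    (hdist : ∀ a b a' b' : ℝ, a < b → a ≤ a' → a' < b' → b' ≤ b →
      β * ((b' - a') / (b - a)) ^ q ≤
          Metric.diam (f '' Set.Icc a' b') / Metric.diam (f '' Set.Icc a b) ∧
        Metric.diam (f '' Set.Icc a' b') / Metric.diam (f '' Set.Icc a b) ≤
          4 * ((b' - a') / (b - a)) ^ p)
    (d : ℝ) (hd : d ∈ Set.Ioo (0 : ℝ) 1)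
    (k j : ℕ) (hk : 1 ≤ k) (hj1 : S.mIdx χ (k - 1) ≤ j) (hj2 : j < S.mIdx χ k)
    (P : ℝ × ℝ) (hP : P ∈ B.Br j) :
    (1 - 8 * χ ^ 2 * ((Mconst χ : ℝ) ^ 2 + 2) * (B.gam (j + 1)) ^ p) *
        Metric.diam (f '' Set.Icc P.1 P.2) ≤
      ∑ Q ∈ B.children j P, Metric.diam (f '' Set.Icc Q.1 Q.2) := by
    classical
  have hχ0 : (0 : ℝ) < χ := by linarith
  have hPlt : P.1 < P.2 := B.lt j P hP
  -- a monotone "length coordinate" for f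
  obtain ⟨g, hgmono, hgd⟩ :
      ∃ g : ℝ → ℝ, StrictMono g ∧
        ∀ a b : ℝ, a ≤ b → Metric.diam (f '' Set.Icc a b) = g b - g a := by
    obtain hmono | hanti := hf.1.continuous.strictMono_of_inj hf.1.bijective.injective
    · refine ⟨f, hmono, fun a b hab => ?_⟩
      have hsub : f '' Set.Icc a b ⊆ Set.Icc (f a) (f b) := by
        rintro _ ⟨x, hx, rfl⟩
        exact ⟨hmono.monotone hx.1, hmono.monotone hx.2⟩
      have hbd : Bornology.IsBounded (Set.Icc (f a) (f b)) := isBounded_Icc _ _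
      refine le_antisymm ?_ ?_
      · calc Metric.diam (f '' Set.Icc a b) ≤ Metric.diam (Set.Icc (f a) (f b)) :=
            Metric.diam_mono hsub hbd
          _ = f b - f a := Real.diam_Icc (hmono.monotone hab)
      · have h1 : f a ∈ f '' Set.Icc a b := ⟨a, ⟨le_rfl, hab⟩, rfl⟩
        have h2 : f b ∈ f '' Set.Icc a b := ⟨b, ⟨hab, le_rfl⟩, rfl⟩
        have hdd := Metric.dist_le_diam_of_mem (hbd.subset hsub) h2 h1
        rw [Real.dist_eq] at hdd
        calc f b - f a ≤ |f b - f a| := le_abs_self _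
          _ ≤ _ := hdd
    · refine ⟨fun x => -f x, fun x y hxy => neg_lt_neg (hanti hxy), fun a b hab => ?_⟩
      have hsub : f '' Set.Icc a b ⊆ Set.Icc (f b) (f a) := by
        rintro _ ⟨x, hx, rfl⟩
        exact ⟨hanti.antitone hx.2, hanti.antitone hx.1⟩
      have hbd : Bornology.IsBounded (Set.Icc (f b) (f a)) := isBounded_Icc _ _
      refine le_antisymm ?_ ?_
      · calc Metric.diam (f '' Set.Icc a b) ≤ Metric.diam (Set.Icc (f b) (f a)) :=
            Metric.diam_mono hsub hbd
          _ = f a - f b := Real.diam_Icc (hanti.antitone hab)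
          _ = -f b - -f a := by ring
      · have h1 : f a ∈ f '' Set.Icc a b := ⟨a, ⟨le_rfl, hab⟩, rfl⟩
        have h2 : f b ∈ f '' Set.Icc a b := ⟨b, ⟨hab, le_rfl⟩, rfl⟩
        have hdd := Metric.dist_le_diam_of_mem (hbd.subset hsub) h1 h2
        rw [Real.dist_eq] at hdd
        calc -f b - -f a = f a - f b := by ring
          _ ≤ |f a - f b| := le_abs_self _
          _ ≤ _ := hdd
  have hdP : 0 < g P.2 - g P.1 := sub_pos.2 (hgmono hPlt)
  -- children basics
  set C := B.children j P with hC
  have hCmem : ∀ Q ∈ C, Q ∈ B.Br (j + 1) ∧ P.1 ≤ Q.1 ∧ Q.2 ≤ P.2 := by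
    intro Q hQ
    rw [hC, BranchSeq.children, Finset.mem_filter] at hQ
    exact ⟨hQ.1, hQ.2⟩
  have hCnd : ∀ Q ∈ C, Q.1 < Q.2 := fun Q hQ => B.lt (j + 1) Q (hCmem Q hQ).1
  have hCdisj : ∀ Q ∈ C, ∀ R ∈ C, Q ≠ R → Q.2 ≤ R.1 ∨ R.2 ≤ Q.1 := by
    intro Q hQ R hR hne
    exact Ioo_disj_order (hCnd Q hQ) (hCnd R hR)
      (B.disj (j + 1) Q (hCmem Q hQ).1 R (hCmem R hR).1 hne)
  have hcard : C.card ≤ Mconst χ ^ 2 := by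
    have h1 := B.card_le j P hP
    have hsub : (C : Set (ℝ × ℝ)) ⊆
        {q ∈ (B.Br (j + 1) : Set (ℝ × ℝ)) | Set.Icc q.1 q.2 ⊆ Set.Icc P.1 P.2} := by
      intro Q hQ
      rw [Finset.mem_coe] at hQ
      exact ⟨(hCmem Q hQ).1, Set.Icc_subset_Icc (hCmem Q hQ).2.1 (hCmem Q hQ).2.2⟩
    have hfin : {q ∈ (B.Br (j + 1) : Set (ℝ × ℝ)) |
        Set.Icc q.1 q.2 ⊆ Set.Icc P.1 P.2}.Finite :=
      (B.Br (j + 1)).finite_toSet.subset (Set.sep_subset _ _)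
    calc C.card = (C : Set (ℝ × ℝ)).ncard := (Set.ncard_coe_finset _).symm
      _ ≤ _ := Set.ncard_le_ncard hsub hfin
      _ ≤ Mconst χ ^ 2 := h1
  -- index bookkeeping
  have hj1' : j + 1 ≤ S.mIdx χ k := hj2
  have hkOf := S.kOf_succ_eq χ hk hj1 hj2
  set aL := S.alphaLo k with haL
  have haLf := S.alphaLo_facts (k := k) hk
  have hξ0' : 0 ≤ S.ξ (k + 1) 0 := S.hξ (k + 1) (by omega) 0 (Nat.zero_le _)
  have hξn' : 0 ≤ S.ξ (k + 1) (S.n (k + 1)) := S.hξ (k + 1) (by omega) _ le_rfl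
  have haL0 : 0 ≤ aL := le_trans hξ0' haLf.1
  set ML := B.maxLen j with hML
  have himg_ne : ((fun r : ℝ × ℝ => r.2 - r.1) '' (B.Br j : Set (ℝ × ℝ))).Nonempty := by
    obtain ⟨r, hr⟩ := B.nonempty j
    exact ⟨r.2 - r.1, r, hr, rfl⟩
  have himg_fin : ((fun r : ℝ × ℝ => r.2 - r.1) '' (B.Br j : Set (ℝ × ℝ))).Finite :=
    (B.Br j).finite_toSet.image _
  have hPML : P.2 - P.1 ≤ ML := le_csSup himg_fin.bddAbove ⟨P, hP, rfl⟩
  have hMLpos : 0 < ML := lt_of_lt_of_le (sub_pos.2 hPlt) hPML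
  have hML2χ : ML ≤ 2 * χ * (P.2 - P.1) := by
    refine csSup_le himg_ne ?_
    rintro x ⟨r, hr, rfl⟩
    exact B.comparable j r hr P hP
  set γ := B.gam (j + 1) with hγdef
  have hγeq : γ = aL / ML := by
    rw [hγdef, BranchSeq.gam, hkOf, Nat.add_sub_cancel, haL, hML]
  have hγ0 : 0 ≤ γ := by rw [hγeq]; exact div_nonneg haL0 hMLpos.le
  -- branch representations
  have hBrRepr : ∀ Q ∈ B.Br (j + 1), ∃ σ τ : List ℕ, σ.length = k ∧ τ.length = k ∧
      ValidWord S.n σ ∧ ValidWord S.n τ ∧ Q.1 = S.aStar σ ∧ Q.2 = S.bStar τ := by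
    rcases lt_or_eq_of_le hj1' with hlt | heq
    · intro Q hQ
      exact B.hull k hk (j + 1) (by omega) hlt Q hQ
    · intro Q hQ
      rw [heq] at hQ
      obtain ⟨σ, hσl, hσv, hQe⟩ := B.levels_repr hQ
      exact ⟨σ, σ, hσl, hσl, hσv, hσv, by rw [hQe], by rw [hQe]⟩
  -- any level-k star interval whose interior meets the interior of P sits inside a child
  have hChild : ∀ ρ : List ℕ, ρ.length = k → ValidWord S.n ρ →
      (Set.Ioo (S.aStar ρ) (S.bStar ρ) ∩ Set.Ioo P.1 P.2).Nonempty →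
      ∃ Q ∈ C, Q.1 ≤ S.aStar ρ ∧ S.bStar ρ ≤ Q.2 := by
    intro ρ hρl hρv hint
    have hρnd : S.aStar ρ < S.bStar ρ := S.star_nondeg hρv
    have hmem := B.mem_levels (χ := χ) hρl hρv
    obtain ⟨Q, hQ, hsubQ⟩ := B.chainUp (j + 1) (S.mIdx χ k) hj1' _ hmem
    have hQnd : Q.1 < Q.2 := B.lt (j + 1) Q hQ
    have hQ_end := Icc_sub_endpoints hρnd hsubQ
    obtain ⟨p', hp', hsubp⟩ := B.nested j Q hQ
    have hp'_end := Icc_sub_endpoints hQnd hsubp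
    have hIoo1 : Set.Ioo (S.aStar ρ) (S.bStar ρ) ⊆ Set.Ioo p'.1 p'.2 :=
      Set.Ioo_subset_Ioo (le_trans hp'_end.1 hQ_end.1) (le_trans hQ_end.2 hp'_end.2)
    have hpP : p' = P := by
      refine B.branch_eq hp' hP ?_
      obtain ⟨x, hx1, hx2⟩ := hint
      exact ⟨x, hIoo1 hx1, hx2⟩
    refine ⟨Q, ?_, hQ_end.1, hQ_end.2⟩
    rw [hC, BranchSeq.children, Finset.mem_filter]
    exact ⟨hQ, by rw [← hpP]; exact hp'_end.1, by rw [← hpP]; exact hp'_end.2⟩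
  -- the level-(k-1) branch containing P
  obtain ⟨pk, hpk, hsubπ0⟩ := B.chainUp (S.mIdx χ (k - 1)) j hj1 P hP
  obtain ⟨π, hπl, hπv, hπe⟩ := B.levels_repr hpk
  have hPsubπ : Set.Icc P.1 P.2 ⊆ Set.Icc (S.aStar π) (S.bStar π) := by
    rw [hπe] at hsubπ0
    exact hsubπ0
  have hPπ_end := Icc_sub_endpoints hPlt hPsubπ
  -- structural gap bound
  have hstruct : ∀ u v : ℝ, P.1 ≤ u → u < v → v ≤ P.2 →
      (∀ Q ∈ C, Q.2 ≤ u ∨ v ≤ Q.1) → (u = P.1 ∨ ∃ Q ∈ C, Q.2 = u) →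
      v - u ≤ χ * aL := by
    intro u v hu huv hv hnoc hrep
    have hchimul : aL ≤ χ * aL := le_mul_of_one_le_left haL0 hχ
    rcases hrep with rfl | ⟨Q, hQC, hQ2u⟩
    · -- the gap starts at the left endpoint of P
      rcases lt_or_eq_of_le hj1 with hjlt | hjeq
      · obtain ⟨σP, τP, hσPl, hτPl, hσPv, hτPv, hP1, hP2⟩ := B.hull k hk j hjlt hj2 P hP
        have hσnd : S.aStar σP < S.bStar σP := S.star_nondeg hσPv
        have hmin : P.1 < min (S.bStar σP) P.2 := by
          refine lt_min ?_ hPlt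
          rw [hP1]
          exact hσnd
        have hint : (Set.Ioo (S.aStar σP) (S.bStar σP) ∩ Set.Ioo P.1 P.2).Nonempty := by
          refine ⟨(P.1 + min (S.bStar σP) P.2) / 2, ⟨?_, ?_⟩, ?_, ?_⟩
          · rw [← hP1]; linarith
          · have := min_le_left (S.bStar σP) P.2; linarith
          · linarith
          · have := min_le_right (S.bStar σP) P.2; linarith
        obtain ⟨Q', hQ'C, hQ'1, hQ'2⟩ := hChild σP hσPl hσPv hint
        have hQ'P := (hCmem Q' hQ'C).2.1
        have hQ'nd := hCnd Q' hQ'C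
        rcases hnoc Q' hQ'C with h | h
        · linarith
        · rw [← hP1] at hQ'1
          linarith
      · -- j = mIdx (k-1) : P is exactly the interval I_π^*
        have hpk' : pk ∈ B.Br j := by rw [← hjeq]; exact hpk
        have hpknd : pk.1 < pk.2 := B.lt j pk hpk'
        have hPpk : P = pk := by
          refine B.branch_eq hP hpk' ?_
          have he := Icc_sub_endpoints hPlt hsubπ0
          exact ⟨(P.1 + P.2) / 2, ⟨by linarith, by linarith⟩, by
            constructor <;> [linarith [he.1]; linarith [he.2]]⟩
        have hP1 : P.1 = S.aStar π := by rw [hPpk, hπe]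
        have hP2 : P.2 = S.bStar π := by rw [hPpk, hπe]
        have hπl1 : π.length + 1 = k := by omega
        have hn2 : 2 ≤ S.n (π.length + 1) := S.hn _ (by omega)
        have hρv : ValidWord S.n (π ++ [1]) := validWord_append hπv le_rfl (by omega)
        have hρl : (π ++ [1]).length = k := by
          rw [List.length_append, List.length_singleton]; omega
        have hsub1 := S.star_sub hπv le_rfl (by omega)
        have hρnd : S.aStar (π ++ [1]) < S.bStar (π ++ [1]) := S.star_nondeg hρv
        have hint : (Set.Ioo (S.aStar (π ++ [1])) (S.bStar (π ++ [1])) ∩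
            Set.Ioo P.1 P.2).Nonempty := by
          refine ⟨(S.aStar (π ++ [1]) + S.bStar (π ++ [1])) / 2,
            ⟨by linarith, by linarith⟩, ?_, ?_⟩
          · rw [hP1]; linarith [hsub1.1]
          · rw [hP2]; linarith [hsub1.2]
        obtain ⟨Q', hQ'C, hQ'1, hQ'2⟩ := hChild (π ++ [1]) hρl hρv hint
        have hQ'P := (hCmem Q' hQ'C).2.1
        have hQ'nd := hCnd Q' hQ'C
        rcases hnoc Q' hQ'C with h | h
        · linarith
        · have hlen1 : S.aStar (π ++ [1]) = S.a (π ++ [1]) + S.ξ (k + 1) 0 := by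
            unfold HPS.aStar
            rw [hρl]
          have hcalc : S.aStar (π ++ [1]) = P.1 + S.ξ (k + 1) 0 := by
            rw [hlen1, hP1, S.aStar_eq hπv]
          linarith [haLf.1]
    · -- the gap starts at the right endpoint of a child Q
      obtain ⟨σq, τ, hσql, hτl, hσqv, hτv, hQ1, hQ2⟩ := hBrRepr Q (hCmem Q hQC).1
      have hune : τ ≠ [] := by
        intro h
        rw [h] at hτl
        simp at hτl
        omega
      have hτeq : τ.dropLast ++ [τ.getLast hune] = τ := List.dropLast_concat_getLast hune
      set π' := τ.dropLast with hπ'def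
      set l := τ.getLast hune with hldef
      obtain ⟨hπ'v, hl1, hl2⟩ := validWord_split (n := S.n) (by rw [hτeq]; exact hτv)
      have hπ'l : π'.length = k - 1 := by rw [hπ'def, List.length_dropLast, hτl]
      have hπ'l1 : π'.length + 1 = k := by omega
      rw [hπ'l1] at hl2
      have uq : u = S.bStar τ := hQ2u.symm.trans hQ2
      have hQl := hCnd Q hQC
      have hQ1P := (hCmem Q hQC).2.1
      have hτnd : S.aStar τ < S.bStar τ := S.star_nondeg hτv
      rcases lt_or_eq_of_le hl2 with hln | hln
      · -- l < n k : there is a sibling interval immediately to the right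
        have hτ'v : ValidWord S.n (π' ++ [l + 1]) :=
          validWord_append hπ'v (by omega) (by rw [hπ'l1]; omega)
        have hτ'l : (π' ++ [l + 1]).length = k := by
          rw [List.length_append, List.length_singleton]; omega
        have hgapeq : S.aStar (π' ++ [l + 1]) - S.bStar τ = S.xiStar k l := by
          have hsg := S.star_gap hπ'v (by omega : 1 ≤ l) (by rw [hπ'l1]; omega)
          rw [hπ'l1, hτeq] at hsg
          exact hsg
        have hxle : S.xiStar k l ≤ χ * aL :=
          S.xiStar_le_chi_alphaLo hχ hgap hk (by omega) (by omega)
        have hxi0 : 0 ≤ S.xiStar k l := S.xiStar_nonneg hk (by omega) (by omega)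
        have hτ'nd : S.aStar (π' ++ [l + 1]) < S.bStar (π' ++ [l + 1]) := S.star_nondeg hτ'v
        by_cases hint : (Set.Ioo (S.aStar (π' ++ [l + 1])) (S.bStar (π' ++ [l + 1])) ∩
            Set.Ioo P.1 P.2).Nonempty
        · obtain ⟨Q', hQ'C, hQ'1, hQ'2⟩ := hChild (π' ++ [l + 1]) hτ'l hτ'v hint
          rcases hnoc Q' hQ'C with h | h
          · linarith
          · linarith
        · rw [Set.not_nonempty_iff_eq_empty] at hint
          rcases Ioo_disj_order hτ'nd hPlt hint with h | h
          · linarith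
          · linarith
      · -- l = n k : u is essentially the right endpoint of P
        have hmemτ := B.mem_levels (χ := χ) hτl hτv
        obtain ⟨Q'', hQ'', hsubQ''⟩ := B.chainUp (j + 1) (S.mIdx χ k) hj1' _ hmemτ
        have hQ''_end := Icc_sub_endpoints hτnd hsubQ''
        have hQQ : Q'' = Q := by
          refine B.branch_eq hQ'' (hCmem Q hQC).1 ?_
          have hmax : max (S.aStar τ) Q.1 < u :=
            max_lt (by linarith) (by rw [← hQ2u]; exact hQl)
          refine ⟨(max (S.aStar τ) Q.1 + u) / 2, ⟨?_, ?_⟩, ?_, ?_⟩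
          · have := le_max_left (S.aStar τ) Q.1
            linarith [hQ''_end.1]
          · rw [uq] at hmax ⊢
            linarith [hQ''_end.2]
          · have := le_max_right (S.aStar τ) Q.1
            linarith
          · rw [← hQ2u]
            linarith
        rw [hQQ] at hQ''_end
        have hsubπ' := S.star_sub hπ'v (by omega : 1 ≤ l) (by rw [hπ'l1]; omega)
        rw [hτeq] at hsubπ'
        have hmemπ' := B.mem_levels (χ := χ) hπ'l hπ'v
        have heqππ' : (S.aStar π', S.bStar π') = (S.aStar π, S.bStar π) := by
          refine B.branch_eq hmemπ' (by rw [← hπe]; exact hpk) ?_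
          refine ⟨(S.aStar τ + S.bStar τ) / 2, ⟨?_, ?_⟩, ?_, ?_⟩
          · linarith [hsubπ'.1]
          · linarith [hsubπ'.2]
          · have h1 : S.aStar π ≤ P.1 := hPπ_end.1
            have h2 : Q.1 ≤ S.aStar τ := hQ''_end.1
            linarith
          · have h1 : P.2 ≤ S.bStar π := hPπ_end.2
            have h2 : Q.2 ≤ P.2 := (hCmem Q hQC).2.2
            have h3 : S.bStar τ = Q.2 := hQ2.symm
            linarith
        have hbb : S.bStar π' = S.bStar π := congrArg Prod.snd heqππ'
        have hbπ' : S.bStar π' = S.b τ := by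
          rw [S.bStar_eq hπ'v, hπ'l1, ← hln, hτeq]
        have hbτ : S.b τ = S.bStar τ + S.ξ (k + 1) (S.n (k + 1)) := by
          show S.b τ = S.b τ - S.ξ (τ.length + 1) (S.n (τ.length + 1)) +
            S.ξ (k + 1) (S.n (k + 1))
          rw [hτl]
          ring
        have hfin : P.2 ≤ u + S.ξ (k + 1) (S.n (k + 1)) := by
          have := hPπ_end.2
          rw [← hbb, hbπ', hbτ, ← uq] at this
          exact this
        linarith [haLf.2]
  -- the quantitative per-gap bound
  have hγp0 : 0 ≤ γ ^ p := Real.rpow_nonneg hγ0 p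
  have hD0 : 0 ≤ 8 * χ ^ 2 * γ ^ p * (g P.2 - g P.1) := by positivity
  have hGap : ∀ u v : ℝ, P.1 ≤ u → u < v → v ≤ P.2 →
      (∀ Q ∈ C, Q.2 ≤ u ∨ v ≤ Q.1) → (u = P.1 ∨ ∃ Q ∈ C, Q.2 = u) →
      g v - g u ≤ 8 * χ ^ 2 * γ ^ p * (g P.2 - g P.1) := by
    intro u v h1 h2 h3 h4 h5
    have hvu := hstruct u v h1 h2 h3 h4 h5
    have hPP : 0 < P.2 - P.1 := sub_pos.2 hPlt
    have hr1 : (v - u) / (P.2 - P.1) ≤ 2 * χ ^ 2 * γ := by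
      rw [hγeq, div_le_iff₀ hPP]
      have h6 : aL * ML ≤ aL * (2 * χ * (P.2 - P.1)) :=
        mul_le_mul_of_nonneg_left hML2χ haL0
      have h7 : 2 * χ ^ 2 * (aL / ML) * (P.2 - P.1) =
          χ * (aL * (2 * χ * (P.2 - P.1))) / ML := by ring
      rw [h7, le_div_iff₀ hMLpos]
      calc (v - u) * ML ≤ (χ * aL) * ML := mul_le_mul_of_nonneg_right hvu hMLpos.le
        _ = χ * (aL * ML) := by ring
        _ ≤ χ * (aL * (2 * χ * (P.2 - P.1))) := mul_le_mul_of_nonneg_left h6 hχ0.le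
    have hr0 : 0 ≤ (v - u) / (P.2 - P.1) := div_nonneg (by linarith) hPP.le
    have hrp : ((v - u) / (P.2 - P.1)) ^ p ≤ 2 * χ ^ 2 * γ ^ p := by
      calc ((v - u) / (P.2 - P.1)) ^ p ≤ (2 * χ ^ 2 * γ) ^ p :=
          Real.rpow_le_rpow hr0 hr1 hp.le
        _ = (2 * χ ^ 2) ^ p * γ ^ p := Real.mul_rpow (by positivity) hγ0
        _ ≤ 2 * χ ^ 2 * γ ^ p := by
            have ha1 : (1 : ℝ) ≤ 2 * χ ^ 2 := by nlinarith
            have ha2 : (2 * χ ^ 2) ^ p ≤ (2 * χ ^ 2) ^ (1 : ℝ) :=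
              Real.rpow_le_rpow_of_exponent_le ha1 hp1
            rw [Real.rpow_one] at ha2
            exact mul_le_mul_of_nonneg_right ha2 hγp0
    have hdiam := (hdist P.1 P.2 u v hPlt h1 h2 h3).2
    rw [hgd u v h2.le, hgd P.1 P.2 hPlt.le, div_le_iff₀ hdP] at hdiam
    calc g v - g u ≤ 4 * ((v - u) / (P.2 - P.1)) ^ p * (g P.2 - g P.1) := hdiam
      _ ≤ 4 * (2 * χ ^ 2 * γ ^ p) * (g P.2 - g P.1) :=
          mul_le_mul_of_nonneg_right (mul_le_mul_of_nonneg_left hrp (by norm_num)) hdP.le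
      _ = 8 * χ ^ 2 * γ ^ p * (g P.2 - g P.1) := by ring
  -- telescoping
  have htel := telescope_sum g hgmono.monotone _ hD0 C.card C P.1 P.2 rfl hPlt.le hCnd
    (fun Q hQ => ⟨(hCmem Q hQ).2.1, (hCmem Q hQ).2.2⟩) hCdisj hGap
  have hsum_eq : ∑ Q ∈ C, Metric.diam (f '' Set.Icc Q.1 Q.2) = ∑ Q ∈ C, (g Q.2 - g Q.1) :=
    Finset.sum_congr rfl fun Q hQ => hgd Q.1 Q.2 (hCnd Q hQ).le
  have hcard' : (C.card : ℝ) + 1 ≤ (Mconst χ : ℝ) ^ 2 + 2 := by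
    have hcc : (C.card : ℝ) ≤ ((Mconst χ ^ 2 : ℕ) : ℝ) := Nat.cast_le.2 hcard
    push_cast at hcc
    linarith
  have hDmul : ((C.card : ℝ) + 1) * (8 * χ ^ 2 * γ ^ p * (g P.2 - g P.1)) ≤
      ((Mconst χ : ℝ) ^ 2 + 2) * (8 * χ ^ 2 * γ ^ p * (g P.2 - g P.1)) :=
    mul_le_mul_of_nonneg_right hcard' hD0
  have hfin1 : ((Mconst χ : ℝ) ^ 2 + 2) * (8 * χ ^ 2 * γ ^ p * (g P.2 - g P.1)) =
      8 * χ ^ 2 * ((Mconst χ : ℝ) ^ 2 + 2) * γ ^ p * (g P.2 - g P.1) := by ring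
  have hkey : (1 - 8 * χ ^ 2 * ((Mconst χ : ℝ) ^ 2 + 2) * γ ^ p) * (g P.2 - g P.1) =
      (g P.2 - g P.1) - 8 * χ ^ 2 * ((Mconst χ : ℝ) ^ 2 + 2) * γ ^ p * (g P.2 - g P.1) := by
    ring
  rw [hgd P.1 P.2 hPlt.le, hsum_eq, hkey]
  linarith [htel, hDmul, hfin1]
end
end

section
/- Let f: ℝ → ℝ be a 1-dimensional quasisymmetric mapping. Then there exist constants β > 0 and 0 < p ≤ 1 ≤ q such that for all intervals I' ⊆ I of positive length, β·(|I'|/|I|)^q ≤ |f(I')|/|f(I)| ≤ 4·(|I'|/|I|)^p; moreover, for every ρ > 0 there exists K_ρ > 0 such that |f(ρI)|/|f(I)| ≤ K_ρ for every interval I of positive length, where ρI denotes the interval with the same center as I and length ρ·|I|. -/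
/-!
Only the case `|x - a| = |x - b|` of quasisymmetry is needed: with `M = max (η 1) 1`, the images
of the two halves of any interval have lengths within a factor `M` of each other. Hence each
halving of an interval towards one of its ends shrinks the length of the image by a factor
between `(1 + M) / M` and `1 + M`.

Let `I' = [u, v] ⊆ I = [a, b]`. If `J ⊆ I` shares an endpoint with `I` and `|J| ≥ 2⁻ⁿ|I|`, then
`J` contains the `n`-th half of `I` towards that endpoint, so `|f(I)| ≤ (1 + M)ⁿ |f(J)|`; applied
to `[u, b] ⊆ [a, b]` and `[u, v] ⊆ [u, b]` this gives `|f(I)| ≤ (1 + M)²ⁿ |f(I')|` whenever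
`|I'| ≥ 2⁻ⁿ|I|`. Dually, if `|I'| ≤ 4⁻ᵏ|I|`, then `I'` lies in the `k`-th half of `[u, b]` towards
`u` or of `[a, b]` towards `b`, so `|f(I')| ≤ (M / (1 + M))ᵏ |f(I)|`. Choosing `n` and `k`
optimally turns these into powers of `|I'| / |I|`. The bound for `ρI` is the lower bound applied
to `I ⊆ 2ⁿI ⊇ ρI`.
-/

open Real Set

theorem exists_mul_rpow_le_of_dyadic {C : ℝ} (hC : 1 ≤ C) :
    ∃ β : ℝ, 0 < β ∧ ∃ q : ℝ, 1 ≤ q ∧ ∀ t s : ℝ, 0 < t → t ≤ 1 →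
      (∀ n : ℕ, 1 ≤ 2 ^ n * t → 1 ≤ C ^ n * s) → β * t ^ q ≤ s := by
  obtain ⟨q, hq⟩ := pow_unbounded_of_one_lt C one_lt_two
  have hq1 : 1 ≤ q :=
    Nat.one_le_iff_ne_zero.2 fun h => by simp only [h, pow_zero] at hq; linarith
  have hC0 : 0 < C := by linarith
  refine ⟨C⁻¹, inv_pos.2 hC0, q, by exact_mod_cast hq1, fun t s ht0 ht1 hdyadic => ?_⟩
  obtain ⟨n, hn, hn1⟩ := exists_nat_pow_near (one_le_one_div ht0 ht1) one_lt_two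
  rw [le_div_iff₀ ht0] at hn
  rw [div_lt_iff₀ ht0] at hn1
  have hs : 1 ≤ C ^ (n + 1) * s := hdyadic (n + 1) hn1.le
  have hs0 : 0 ≤ s := nonneg_of_mul_nonneg_right (zero_le_one.trans hs) (by positivity)
  have hCt : C ^ n * t ^ q ≤ 1 := calc
    C ^ n * t ^ q ≤ (2 ^ q) ^ n * t ^ q := by gcongr
    _ = (2 ^ n * t) ^ q := by ring
    _ ≤ 1 := pow_le_one₀ (by positivity) hn
  rw [rpow_natCast, inv_mul_le_iff₀ hC0]
  calc t ^ q ≤ t ^ q * (C ^ (n + 1) * s) := le_mul_of_one_le_right (by positivity) hs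
    _ = C * s * (C ^ n * t ^ q) := by ring
    _ ≤ C * s := mul_le_of_le_one_right (by positivity) hCt

theorem exists_le_four_mul_rpow_of_dyadic {θ : ℝ} (hθ : 1 / 4 ≤ θ) (hθ1 : θ < 1) :
    ∃ p : ℝ, 0 < p ∧ p ≤ 1 ∧ ∀ t s : ℝ, 0 < t → t ≤ 1 →
      (∀ k : ℕ, 4 ^ k * t ≤ 1 → s ≤ θ ^ k) → s ≤ 4 * t ^ p := by
  have hθ0 : 0 < θ := by linarith
  have hθinv : θ⁻¹ ≤ 4 := inv_le_of_inv_le₀ (by norm_num) (by linarith)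
  refine ⟨logb 4 θ⁻¹, logb_pos (by norm_num) (one_lt_inv₀ hθ0 |>.2 hθ1),
    (logb_le_iff_le_rpow (by norm_num) (by positivity)).2 (by rwa [rpow_one]),
    fun t s ht0 ht1 hdyadic => ?_⟩
  set p := logb 4 θ⁻¹
  obtain ⟨k, hk, hk1⟩ :=
    exists_nat_pow_near (one_le_one_div ht0 ht1) (by norm_num : (1 : ℝ) < 4)
  rw [le_div_iff₀ ht0] at hk
  rw [div_lt_iff₀ ht0] at hk1
  have hθk : θ ^ (k + 1) ≤ t ^ p := by
    have h1 : 1 ≤ (4 ^ (k + 1) * t) ^ p :=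
      one_le_rpow hk1.le (logb_nonneg (by norm_num) (one_le_inv₀ hθ0 |>.2 hθ1.le))
    rwa [mul_rpow (by positivity) ht0.le, ← rpow_pow_comm (by norm_num),
      rpow_logb (by norm_num) (by norm_num) (by positivity), inv_pow,
      le_inv_mul_iff₀ (by positivity), mul_one] at h1
  calc s ≤ θ ^ k := hdyadic k hk
    _ ≤ 4 * θ * θ ^ k := le_mul_of_one_le_left (by positivity) (by linarith)
    _ = 4 * θ ^ (k + 1) := by ring
    _ ≤ 4 * t ^ p := by gcongr

/-- The Beurling–Ahlfors `M`-condition in midpoint form: for monotone `f` it says that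
`M⁻¹ ≤ (f (x + t) - f x) / (f x - f (x - t)) ≤ M`. -/
def BeurlingAhlforsWith (M : ℝ) (f : ℝ → ℝ) : Prop :=
  ∀ a b : ℝ, |f ((a + b) / 2) - f b| ≤ M * |f ((a + b) / 2) - f a|

theorem IsQuasisymmetric.exists_beurlingAhlforsWith {f : ℝ → ℝ} (hf : IsQuasisymmetric f) :
    ∃ M, 1 ≤ M ∧ BeurlingAhlforsWith M f := by
  obtain ⟨hhomeo, η, hη⟩ := hf
  refine ⟨max (η ⟨1, mem_Ici.2 zero_le_one⟩) 1, le_max_right _ _, fun a b => ?_⟩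
  rcases eq_or_ne a b with rfl | hab
  · simp
  have hma : (a + b) / 2 ≠ a := fun h => hab (by linarith)
  have hdist : |(a + b) / 2 - b| / |(a + b) / 2 - a| = 1 := by
    rw [div_eq_one_iff_eq (abs_ne_zero.2 (sub_ne_zero.2 hma)), abs_sub_comm]
    congr 1
    ring
  have hpos : 0 < |f ((a + b) / 2) - f a| :=
    abs_pos.2 (sub_ne_zero.2 (hhomeo.injective.ne hma))
  rw [← div_le_iff₀ hpos]
  calc _ ≤ _ := hη ((a + b) / 2) b a hma
    _ = (η ⟨1, mem_Ici.2 zero_le_one⟩ : ℝ) := by simp only [hdist]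
    _ ≤ _ := le_max_left _ _

namespace BeurlingAhlforsWith

variable {M : ℝ} {f : ℝ → ℝ}

theorem swap (h : BeurlingAhlforsWith M f) (a b : ℝ) :
    |f ((a + b) / 2) - f a| ≤ M * |f ((a + b) / 2) - f b| := by
  rw [add_comm]
  exact h b a

theorem neg (h : BeurlingAhlforsWith M f) : BeurlingAhlforsWith M (-f) := fun a b => by
  simpa only [Pi.neg_apply, neg_sub_neg, abs_sub_comm (f a), abs_sub_comm (f b)] using h a b

theorem comp_neg (h : BeurlingAhlforsWith M f) : BeurlingAhlforsWith M (fun x => f (-x)) :=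
  fun a b => by
    have := h (-a) (-b)
    rwa [show (-a + -b) / 2 = -((a + b) / 2) by ring] at this

theorem sub_le_one_add_mul_sub_midpoint (h : BeurlingAhlforsWith M f) (hf : Monotone f)
    {a b : ℝ} (hab : a ≤ b) : f b - f a ≤ (1 + M) * (f ((a + b) / 2) - f a) := by
  have := h a b
  rw [abs_of_nonpos (sub_nonpos.2 (hf (by linarith))),
    abs_of_nonneg (sub_nonneg.2 (hf (by linarith)))] at this
  linarith

theorem one_add_mul_sub_midpoint_le (h : BeurlingAhlforsWith M f) (hf : Monotone f)
    {a b : ℝ} (hab : a ≤ b) : (1 + M) * (f ((a + b) / 2) - f a) ≤ M * (f b - f a) := by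
  have := h.swap a b
  rw [abs_of_nonneg (sub_nonneg.2 (hf (by linarith))),
    abs_of_nonpos (sub_nonpos.2 (hf (by linarith)))] at this
  linarith

theorem sub_le_one_add_pow_mul_sub (h : BeurlingAhlforsWith M f) (hf : Monotone f)
    (hM : 0 ≤ M) (n : ℕ) {a v b : ℝ} (hav : a ≤ v) (hvb : v ≤ b)
    (hlen : b - a ≤ 2 ^ n * (v - a)) :
    f b - f a ≤ (1 + M) ^ n * (f v - f a) := by
  induction n generalizing b with
  | zero =>
    obtain rfl : v = b := le_antisymm hvb (by simpa using hlen)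
    simp
  | succ n ih =>
    have hhalf := h.sub_le_one_add_mul_sub_midpoint hf (hav.trans hvb)
    have hfva : 0 ≤ f v - f a := sub_nonneg.2 (hf hav)
    rcases le_or_gt ((a + b) / 2) v with hmv | hvm
    · calc f b - f a ≤ (1 + M) * (f ((a + b) / 2) - f a) := hhalf
        _ ≤ (1 + M) * (f v - f a) := by gcongr; exact hf hmv
        _ ≤ (1 + M) ^ (n + 1) * (f v - f a) := by
          gcongr
          exact le_self_pow₀ (by linarith) n.succ_ne_zero
    · have hlen' : (a + b) / 2 - a ≤ 2 ^ n * (v - a) := by rw [pow_succ] at hlen; linarith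
      calc f b - f a ≤ (1 + M) * (f ((a + b) / 2) - f a) := hhalf
        _ ≤ (1 + M) * ((1 + M) ^ n * (f v - f a)) := by gcongr; exact ih hvm.le hlen'
        _ = (1 + M) ^ (n + 1) * (f v - f a) := by ring

theorem one_add_pow_mul_sub_le (h : BeurlingAhlforsWith M f) (hf : Monotone f) (hM : 0 ≤ M)
    (n : ℕ) {a v b : ℝ} (hav : a ≤ v) (hlen : 2 ^ n * (v - a) ≤ b - a) :
    (1 + M) ^ n * (f v - f a) ≤ M ^ n * (f b - f a) := by
  induction n generalizing b with
  | zero =>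
    simp only [pow_zero, one_mul] at hlen ⊢
    linarith [hf (show v ≤ b by linarith)]
  | succ n ih =>
    have hlen' : 2 ^ n * (v - a) ≤ (a + b) / 2 - a := by rw [pow_succ] at hlen; linarith
    have hab : a ≤ b := by nlinarith [pow_pos (two_pos (α := ℝ)) n]
    calc (1 + M) ^ (n + 1) * (f v - f a) = (1 + M) * ((1 + M) ^ n * (f v - f a)) := by ring
      _ ≤ (1 + M) * (M ^ n * (f ((a + b) / 2) - f a)) :=
          mul_le_mul_of_nonneg_left (ih hlen') (by linarith)
      _ = M ^ n * ((1 + M) * (f ((a + b) / 2) - f a)) := by ring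
      _ ≤ M ^ n * (M * (f b - f a)) :=
          mul_le_mul_of_nonneg_left (h.one_add_mul_sub_midpoint_le hf hab) (pow_nonneg hM n)
      _ = M ^ (n + 1) * (f b - f a) := by ring

theorem sub_le_one_add_pow_mul_sub' (h : BeurlingAhlforsWith M f) (hf : Monotone f)
    (hM : 0 ≤ M) (n : ℕ) {a u b : ℝ} (hau : a ≤ u) (hub : u ≤ b)
    (hlen : b - a ≤ 2 ^ n * (b - u)) :
    f b - f a ≤ (1 + M) ^ n * (f b - f u) := by
  have := h.comp_neg.neg.sub_le_one_add_pow_mul_sub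
    (hf.comp_antitone fun _ _ => neg_le_neg).neg hM n
    (neg_le_neg hub) (neg_le_neg hau) (by linarith)
  simpa only [Pi.neg_apply, neg_neg, neg_sub_neg] using this

theorem one_add_pow_mul_sub_le' (h : BeurlingAhlforsWith M f) (hf : Monotone f) (hM : 0 ≤ M)
    (n : ℕ) {a u b : ℝ} (hub : u ≤ b) (hlen : 2 ^ n * (b - u) ≤ b - a) :
    (1 + M) ^ n * (f b - f u) ≤ M ^ n * (f b - f a) := by
  have := h.comp_neg.neg.one_add_pow_mul_sub_le
    (hf.comp_antitone fun _ _ => neg_le_neg).neg hM n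
    (neg_le_neg hub) (a := -b) (b := -a) (by linarith)
  simpa only [Pi.neg_apply, neg_neg, neg_sub_neg] using this

theorem sub_le_pow_mul_sub_of_le_two_pow_mul (h : BeurlingAhlforsWith M f) (hf : Monotone f)
    (hM : 0 ≤ M) (n : ℕ) {a u v b : ℝ} (hau : a ≤ u) (huv : u ≤ v) (hvb : v ≤ b)
    (hlen : b - a ≤ 2 ^ n * (v - u)) :
    f b - f a ≤ ((1 + M) ^ 2) ^ n * (f v - f u) := by
  have h2n : (0 : ℝ) ≤ 2 ^ n := by positivity
  calc f b - f a ≤ (1 + M) ^ n * (f b - f u) :=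
        h.sub_le_one_add_pow_mul_sub' hf hM n hau (huv.trans hvb) (by nlinarith)
    _ ≤ (1 + M) ^ n * ((1 + M) ^ n * (f v - f u)) := by
        gcongr
        exact h.sub_le_one_add_pow_mul_sub hf hM n huv hvb (by linarith)
    _ = ((1 + M) ^ 2) ^ n * (f v - f u) := by rw [← pow_mul, two_mul, pow_add, mul_assoc]

theorem one_add_pow_mul_sub_le_of_four_pow_mul_le (h : BeurlingAhlforsWith M f)
    (hf : Monotone f) (hM : 0 ≤ M) (k : ℕ) {a u v b : ℝ} (hau : a ≤ u) (huv : u ≤ v)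
    (hvb : v ≤ b) (hlen : 4 ^ k * (v - u) ≤ b - a) :
    (1 + M) ^ k * (f v - f u) ≤ M ^ k * (f b - f a) := by
  -- either `[u, v]` is short compared with `[u, b]`, or `[u, b]` is short compared with `[a, b]`
  rcases le_or_gt (2 ^ k * (v - u)) (b - u) with hnear | hfar
  · calc (1 + M) ^ k * (f v - f u) ≤ M ^ k * (f b - f u) :=
          h.one_add_pow_mul_sub_le hf hM k huv hnear
      _ ≤ M ^ k * (f b - f a) := by gcongr; exact hf hau
  · have hlen' : 2 ^ k * (b - u) ≤ b - a := by
      have h4 : (4 : ℝ) ^ k = 2 ^ k * 2 ^ k := by rw [← mul_pow]; norm_num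
      nlinarith [pow_pos (two_pos (α := ℝ)) k]
    calc (1 + M) ^ k * (f v - f u) ≤ (1 + M) ^ k * (f b - f u) := by gcongr; exact hf hvb
      _ ≤ M ^ k * (f b - f a) := h.one_add_pow_mul_sub_le' hf hM k (huv.trans hvb) hlen'

theorem exists_rpow_distortion_bounds (h : BeurlingAhlforsWith M f) (hf : StrictMono f)
    (hM : 1 ≤ M) :
    ∃ β : ℝ, 0 < β ∧ ∃ p q : ℝ, 0 < p ∧ p ≤ 1 ∧ 1 ≤ q ∧
      ∀ a b a' b' : ℝ, a < b → a ≤ a' → a' < b' → b' ≤ b →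
        β * ((b' - a') / (b - a)) ^ q ≤ (f b' - f a') / (f b - f a) ∧
          (f b' - f a') / (f b - f a) ≤ 4 * ((b' - a') / (b - a)) ^ p := by
  obtain ⟨β, hβ, q, hq, hlower⟩ := exists_mul_rpow_le_of_dyadic
    (one_le_pow₀ (by linarith : (1 : ℝ) ≤ 1 + M) : 1 ≤ (1 + M) ^ 2)
  obtain ⟨p, hp0, hp1, hupper⟩ := exists_le_four_mul_rpow_of_dyadic (θ := M / (1 + M))
    (by rw [le_div_iff₀ (by linarith)]; linarith) (by rw [div_lt_one (by linarith)]; linarith)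
  refine ⟨β, hβ, p, q, hp0, hp1, hq, fun a b a' b' hab ha hab' hb => ?_⟩
  have hlen : 0 < b - a := sub_pos.2 hab
  have himg : 0 < f b - f a := sub_pos.2 (hf hab)
  have ht0 : 0 < (b' - a') / (b - a) := div_pos (sub_pos.2 hab') hlen
  have ht1 : (b' - a') / (b - a) ≤ 1 := div_le_one_of_le₀ (by linarith) hlen.le
  refine ⟨hlower _ _ ht0 ht1 fun n hn => ?_, hupper _ _ ht0 ht1 fun k hk => ?_⟩
  · rw [mul_div_assoc', le_div_iff₀ hlen, one_mul] at hn
    rw [mul_div_assoc', le_div_iff₀ himg, one_mul]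
    exact h.sub_le_pow_mul_sub_of_le_two_pow_mul hf.monotone (by linarith) n ha hab'.le hb hn
  · rw [mul_div_assoc', div_le_one hlen] at hk
    rw [div_pow, div_le_div_iff₀ himg (by positivity), mul_comm]
    exact h.one_add_pow_mul_sub_le_of_four_pow_mul_le hf.monotone (by linarith) k ha hab'.le hb hk

theorem exists_dilation_distortion_bound (h : BeurlingAhlforsWith M f) (hf : StrictMono f)
    (hM : 0 ≤ M) (ρ : ℝ) :
    ∃ K : ℝ, 0 < K ∧ ∀ a b : ℝ, a < b →
      (f ((a + b) / 2 + ρ * (b - a) / 2) - f ((a + b) / 2 - ρ * (b - a) / 2)) /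
        (f b - f a) ≤ K := by
  obtain ⟨n, hn⟩ := pow_unbounded_of_one_lt ρ one_lt_two
  refine ⟨((1 + M) ^ 2) ^ n, by positivity, fun a b hab => ?_⟩
  set c := (a + b) / 2 with hc_def
  set R := 2 ^ n * (b - a) / 2 with hR_def
  have hρR : ρ * (b - a) / 2 ≤ R := by rw [hR_def]; gcongr
  have hR : (b - a) / 2 ≤ R := by
    have : (1 : ℝ) ≤ 2 ^ n := one_le_pow₀ one_le_two
    nlinarith
  have hdilate := h.sub_le_pow_mul_sub_of_le_two_pow_mul hf.monotone hM n
    (a := c - R) (b := c + R) (by linarith) hab.le (by linarith) (by linarith)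
  rw [div_le_iff₀ (sub_pos.2 (hf hab))]
  linarith [hf.monotone (show c + ρ * (b - a) / 2 ≤ c + R by linarith),
    hf.monotone (show c - R ≤ c - ρ * (b - a) / 2 by linarith)]

theorem exists_strictMono_diam_image_Icc_eq (h : BeurlingAhlforsWith M f) (hc : Continuous f)
    (hinj : Function.Injective f) :
    ∃ g : ℝ → ℝ, StrictMono g ∧ BeurlingAhlforsWith M g ∧
      ∀ a b : ℝ, a ≤ b → Metric.diam (f '' Icc a b) = g b - g a := by
  rcases hc.strictMono_of_inj hinj with hmono | hanti
  · exact ⟨f, hmono, h, fun a b hab => by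
      rw [hc.image_Icc_of_strictMono hmono, Real.diam_Icc (hmono.monotone hab)]⟩
  · refine ⟨-f, hanti.neg, h.neg, fun a b hab => ?_⟩
    rw [hc.continuousOn.image_Icc_of_antitoneOn hab (hanti.antitone.antitoneOn _),
      Real.diam_Icc (hanti.antitone hab), Pi.neg_apply, Pi.neg_apply, neg_sub_neg]

end BeurlingAhlforsWith

/-- **Lemma 2.3 (distortion lemma).** For a 1-dimensional quasisymmetric mapping `f` there
are `β > 0` and `0 < p ≤ 1 ≤ q` with
`β (|I'|/|I|)^q ≤ |f(I')|/|f(I)| ≤ 4 (|I'|/|I|)^p` for all intervals `I' ⊆ I`; moreover, for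
every `ρ > 0` there is `K_ρ > 0` with `|f(ρI)|/|f(I)| ≤ K_ρ`, where `ρI` is the interval with
the same center as `I` and `|ρI| = ρ|I|`. -/
theorem quasisymmetric_distortion
    (f : ℝ → ℝ) (hf : IsQuasisymmetric f) :
    (∃ β : ℝ, 0 < β ∧ ∃ p q : ℝ, 0 < p ∧ p ≤ 1 ∧ 1 ≤ q ∧
      ∀ a b a' b' : ℝ, a < b → a ≤ a' → a' < b' → b' ≤ b →
        β * ((b' - a') / (b - a)) ^ q ≤
            Metric.diam (f '' Set.Icc a' b') / Metric.diam (f '' Set.Icc a b) ∧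
          Metric.diam (f '' Set.Icc a' b') / Metric.diam (f '' Set.Icc a b) ≤
            4 * ((b' - a') / (b - a)) ^ p) ∧
    ∀ ρ : ℝ, 0 < ρ → ∃ K : ℝ, 0 < K ∧
      ∀ a b : ℝ, a < b →
        Metric.diam (f ''
            Set.Icc ((a + b) / 2 - ρ * (b - a) / 2) ((a + b) / 2 + ρ * (b - a) / 2)) /
          Metric.diam (f '' Set.Icc a b) ≤ K := by
  obtain ⟨M, hM, hMf⟩ := hf.exists_beurlingAhlforsWith
  obtain ⟨g, hg, hMg, hdiam⟩ :=
    hMf.exists_strictMono_diam_image_Icc_eq hf.1.continuous hf.1.injective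
  refine ⟨?_, fun ρ hρ => ?_⟩
  · obtain ⟨β, hβ, p, q, hp0, hp1, hq, hbounds⟩ := hMg.exists_rpow_distortion_bounds hg hM
    refine ⟨β, hβ, p, q, hp0, hp1, hq, fun a b a' b' hab ha hab' hb => ?_⟩
    rw [hdiam a b hab.le, hdiam a' b' hab'.le]
    exact hbounds a b a' b' hab ha hab' hb
  · obtain ⟨K, hK, hbound⟩ := hMg.exists_dilation_distortion_bound hg (by linarith) ρ
    refine ⟨K, hK, fun a b hab => ?_⟩
    rw [hdiam a b hab.le, hdiam _ _ (by nlinarith)]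
    exact hbound a b hab
end
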